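/- For c = [c_ε] ∈ ρR̃^d and r = [r_ε] ∈ ρR̃ with r > 0, the closure of the ball B_r(c) in the sharp topology equals { x ∈ ρR̃^d : |x − c| ≤ r }, which coincides with the internal set generated by the net of closed Euclidean balls of centers c_ε and radii r_ε; moreover B_r(c) itself equals the strongly internal set generated by the net of open Euclidean balls of centers c_ε and radii r_ε. -/

import Mathlib

open MeasureTheory

namespace HFT

noncomputable section

/-- The index set `I = (0,1]`. -/
abbrev Idx : Type := {e : ℝ // 0 < e ∧ e ≤ 1}

/-- "For ε small": the property holds for all sufficiently small indices. -/
def Ev (P : Idx → Prop) : Prop := ∃ e0 : Idx, ∀ e : Idx, e.1 ≤ e0.1 → P e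

/-- A gauge: a net `ρ : I → (0,1]` tending to `0` as `ε → 0⁺`. -/
structure Gauge where
  ρ : Idx → ℝ
  pos : ∀ e, 0 < ρ e
  le_one : ∀ e, ρ e ≤ 1
  to_zero : ∀ δ : ℝ, 0 < δ → Ev fun e => ρ e < δ

variable (g : Gauge)

/-- A net of reals is ρ-moderate. -/
def ModerateR (x : Idx → ℝ) : Prop := ∃ N : ℕ, Ev fun e => |x e| ≤ (g.ρ e)⁻¹ ^ N

/-- Two real nets are ρ-equivalent: they define the same generalized number. -/
def EquivR (x y : Idx → ℝ) : Prop := ∀ m : ℕ, Ev fun e => |x e - y e| ≤ g.ρ e ^ m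

/-- ρ-negligible net. -/
def NegligibleR (x : Idx → ℝ) : Prop := EquivR g x fun _ => 0

/-- Order of the Robinson–Colombeau ring at the level of representatives. -/
def leR (x y : Idx → ℝ) : Prop :=
  ∃ z, NegligibleR g z ∧ Ev fun e => x e ≤ y e + z e

/-- Invertibility in the Robinson–Colombeau ring, at the level of representatives. -/
def InvR (x : Idx → ℝ) : Prop :=
  ∃ y, ModerateR g y ∧ EquivR g (fun e => x e * y e) fun _ => 1

/-- Strict order: `x < y` iff `x ≤ y` and `y − x` is invertible. -/
def ltR (x y : Idx → ℝ) : Prop := leR g x y ∧ InvR g fun e => y e - x e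

/-- `x > 0`: positive and invertible. -/
def PosInvR (x : Idx → ℝ) : Prop := ltR g (fun _ => 0) x

/-- Constant net. -/
def cR (c : ℝ) : Idx → ℝ := fun _ => c

/-- Positive infinite generalized number. -/
def InfiniteR (k : Idx → ℝ) : Prop := ∀ r : ℝ, 0 < r → leR g (cR r) k

/-- Strong infinite number: `|k| ≥ dρ^{−s}` for some real `s > 0`. -/
def StrongInfiniteR (k : Idx → ℝ) : Prop :=
  ∃ s : ℝ, 0 < s ∧ Ev fun e => g.ρ e ^ (-s) ≤ |k e|

def dRhoPow (m : ℕ) : Idx → ℝ := fun e => g.ρ e ^ m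
def dRhoNegPow (m : ℕ) : Idx → ℝ := fun e => (g.ρ e)⁻¹ ^ m

/-- Moderate complex nets. -/
def ModerateC (x : Idx → ℂ) : Prop := ModerateR g fun e => ‖x e‖

/-- Equivalent complex nets. -/
def EquivC (x y : Idx → ℂ) : Prop :=
  ∀ m : ℕ, Ev fun e => ‖x e - y e‖ ≤ g.ρ e ^ m

/- Subpoints: co-final subsets of the index set and relativized notions. -/

/-- `L ⊆ I` is co-final: `0` is an accumulation point of `L`. -/
def CoFinal (L : Set Idx) : Prop := ∀ δ : ℝ, 0 < δ → ∃ e ∈ L, e.1 < δ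

def EvOn (L : Set Idx) (P : Idx → Prop) : Prop :=
  ∃ e0 : Idx, ∀ e ∈ L, e.1 ≤ e0.1 → P e

def ModerateROn (L : Set Idx) (x : Idx → ℝ) : Prop :=
  ∃ N : ℕ, EvOn L fun e => |x e| ≤ (g.ρ e)⁻¹ ^ N

def EquivROn (L : Set Idx) (x y : Idx → ℝ) : Prop :=
  ∀ m : ℕ, EvOn L fun e => |x e - y e| ≤ g.ρ e ^ m

def NegligibleROn (L : Set Idx) (x : Idx → ℝ) : Prop := EquivROn g L x fun _ => 0

def leROn (L : Set Idx) (x y : Idx → ℝ) : Prop :=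
  ∃ z, NegligibleROn g L z ∧ EvOn L fun e => x e ≤ y e + z e

def InvROn (L : Set Idx) (x : Idx → ℝ) : Prop :=
  ∃ y, ModerateROn g L y ∧ EquivROn g L (fun e => x e * y e) fun _ => 1

def ltROn (L : Set Idx) (x y : Idx → ℝ) : Prop :=
  leROn g L x y ∧ InvROn g L fun e => y e - x e

/- Vector-valued generalized points. -/

abbrev En (n : ℕ) : Type := EuclideanSpace ℝ (Fin n)

def ModerateV {n : ℕ} (x : Idx → En n) : Prop := ModerateR g fun e => ‖x e‖

def EquivV {n : ℕ} (x y : Idx → En n) : Prop :=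
  ∀ m : ℕ, Ev fun e => ‖x e - y e‖ ≤ g.ρ e ^ m

def distNet {n : ℕ} (x y : Idx → En n) : Idx → ℝ := fun e => ‖x e - y e‖
def normNet {n : ℕ} (x : Idx → En n) : Idx → ℝ := fun e => ‖x e‖
def coord {n : ℕ} (x : Idx → En n) (i : Fin n) : Idx → ℝ := fun e => x e i

/-- Membership in the internal set generated by a net of subsets of `ℝⁿ`. -/
def MemInternal {n : ℕ} (A : Idx → Set (En n)) (x : Idx → En n) : Prop :=
  ∃ x', EquivV g x x' ∧ Ev fun e => x' e ∈ A e

/-- Strong membership: every representative is eventually in `A_ε`. -/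
def StrongMem {n : ℕ} (A : Idx → Set (En n)) (x : Idx → En n) : Prop :=
  ∀ x', EquivV g x x' → Ev fun e => x' e ∈ A e

/-- A (saturated) set of generalized points is open in the sharp topology. -/
def SharpOpen {n : ℕ} (S : Set (Idx → En n)) : Prop :=
  ∀ x, ModerateV g x → x ∈ S →
    ∃ r, PosInvR g r ∧ ∀ y, ModerateV g y → ltR g (distNet y x) r → y ∈ S

/-- Closed in the sharp topology. -/
def SharpClosed {n : ℕ} (S : Set (Idx → En n)) : Prop :=
  ∀ x, ModerateV g x → x ∉ S →
    ∃ r, PosInvR g r ∧ ∀ y, ModerateV g y → ltR g (distNet y x) r → y ∉ S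

/-- Closure in the sharp topology. -/
def SharpClosure {n : ℕ} (S : Set (Idx → En n)) : Set (Idx → En n) :=
  {x | ModerateV g x ∧ ∀ r, PosInvR g r → ∃ y ∈ S, ltR g (distNet y x) r}

/-- Sharply bounded set of generalized points. -/
def SharplyBounded {n : ℕ} (S : Set (Idx → En n)) : Prop :=
  ∃ R, PosInvR g R ∧ ∀ x ∈ S, ltR g (normNet x) R

/-- Functionally compact: an internal set generated by compacts which is sharply bounded. -/
def FCompact {n : ℕ} (S : Set (Idx → En n)) : Prop :=
  (∃ A : Idx → Set (En n), (∀ e, IsCompact (A e)) ∧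
    S = {x | ModerateV g x ∧ MemInternal g A x}) ∧ SharplyBounded g S

/-- Sharp ball of center `c` and radius `r`. -/
def BallG {n : ℕ} (c : Idx → En n) (r : Idx → ℝ) : Set (Idx → En n) :=
  {x | ModerateV g x ∧ ltR g (distNet x c) r}

/-- Pointwise sum of two sets of generalized points. -/
def sumSet {n : ℕ} (S T : Set (Idx → En n)) : Set (Idx → En n) :=
  {z | ∃ x ∈ S, ∃ y ∈ T, z = fun e => x e + y e}

/-- The generalized box `[−h,h]ⁿ` as a set of generalized points. -/
def BoxSet {n : ℕ} (h : Idx → ℝ) : Set (Idx → En n) :=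
  {x | ModerateV g x ∧ ∀ i : Fin n, leR g (fun e => |x e i|) h}

/-- All generalized (moderate) points. -/
def AllPts (n : ℕ) : Set (Idx → En n) := {x | ModerateV g x}

/- Derivatives of smooth maps on `ℝⁿ`. -/

noncomputable def pderivF {n : ℕ} {F : Type*} [NormedAddCommGroup F] [NormedSpace ℝ F]
    (i : Fin n) (f : En n → F) : En n → F :=
  fun x => fderiv ℝ f x (EuclideanSpace.single i 1)

/-- Iterated partial derivative `∂^α`. -/
noncomputable def pderivMulti {n : ℕ} {F : Type*} [NormedAddCommGroup F] [NormedSpace ℝ F]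
    (α : Fin n → ℕ) (f : En n → F) : En n → F :=
  (List.finRange n).foldr (fun i h => (pderivF i)^[α i] h) f

/-- The net `(f_ε)` of smooth functions defines a GSF on the set `X` of generalized points. -/
def IsGSFOn {n : ℕ} (X : Set (Idx → En n)) (f : Idx → En n → ℂ) : Prop :=
  (∀ e, ContDiff ℝ (⊤ : ℕ∞) (f e)) ∧
  ∀ x ∈ X, ∀ α : Fin n → ℕ,
    ModerateC g (fun e => pderivMulti α (f e) (x e)) ∧
    ∀ x' ∈ X, EquivV g x x' →
      EquivC g (fun e => pderivMulti α (f e) (x e)) (fun e => pderivMulti α (f e) (x' e))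

/-- Support of a GSF: sharp closure of the points where `|f(x)|` is positive invertible. -/
def suppNet {n : ℕ} (f : Idx → En n → ℂ) : Set (Idx → En n) :=
  SharpClosure g {x | ModerateV g x ∧ PosInvR g fun e => ‖f e (x e)‖}

/- Integration over hyperfinite boxes. -/

/-- The box `[−c,c]ⁿ ⊆ ℝⁿ`. -/
def box (n : ℕ) (c : ℝ) : Set (En n) := {v | ∀ i, |v i| ≤ c}

/-- ε-wise integral over the box `[−h_ε, h_ε]ⁿ`. -/
noncomputable def intBox {n : ℕ} (f : Idx → En n → ℂ) (h : Idx → ℝ) : Idx → ℂ :=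
  fun e => ∫ v in box n (h e), f e v

/-- Convolution of GSF, integrating over a box containing the support of the first factor. -/
noncomputable def convNet {n : ℕ} (f f' : Idx → En n → ℂ) (h : Idx → ℝ) :
    Idx → En n → ℂ :=
  fun e x => ∫ y in box n (h e), f e y * f' e (x - y)

/-- Dot product on `ℝⁿ`. -/
def dotP {n : ℕ} (x w : En n) : ℝ := ∑ i, x i * w i

/-- The hyperfinite Fourier transform `F_k(f)`. -/
noncomputable def FTnet {n : ℕ} (f : Idx → En n → ℂ) (k : Idx → ℝ) : Idx → En n → ℂ :=
  fun e w => ∫ x in box n (k e), f e x * Complex.exp (-(Complex.I * (dotP x w : ℂ)))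

/- One-dimensional versions. -/

def SharpClosure1 (S : Set (Idx → ℝ)) : Set (Idx → ℝ) :=
  {x | ModerateR g x ∧ ∀ r, PosInvR g r → ∃ y ∈ S, ltR g (fun e => |y e - x e|) r}

def supp1 (ψ : Idx → ℝ → ℂ) : Set (Idx → ℝ) :=
  SharpClosure1 g {x | ModerateR g x ∧ PosInvR g fun e => ‖ψ e (x e)‖}

def IsGSF1 (X : Set (Idx → ℝ)) (ψ : Idx → ℝ → ℂ) : Prop :=
  (∀ e, ContDiff ℝ (⊤ : ℕ∞) (ψ e)) ∧
  ∀ x ∈ X, ∀ j : ℕ,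
    ModerateC g (fun e => iteratedDeriv j (ψ e) (x e)) ∧
    ∀ x' ∈ X, EquivR g x x' →
      EquivC g (fun e => iteratedDeriv j (ψ e) (x e))
        (fun e => iteratedDeriv j (ψ e) (x' e))

/-- One-dimensional hyperfinite Fourier transform over `[−k,k]`. -/
noncomputable def FT1 (ψ : Idx → ℝ → ℂ) (k : Idx → ℝ) : Idx → ℝ → ℂ :=
  fun e w => ∫ x in Set.Icc (-(k e)) (k e), ψ e x * Complex.exp (-(Complex.I * ((x * w : ℝ) : ℂ)))



def idx1 : Idx := ⟨1, by norm_num⟩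

lemma ev_of_forall {P : Idx → Prop} (h : ∀ e, P e) : Ev P := ⟨idx1, fun e _ => h e⟩

lemma evAnd {P Q : Idx → Prop} (hP : Ev P) (hQ : Ev Q) : Ev fun e => P e ∧ Q e := by
  obtain ⟨a, ha⟩ := hP; obtain ⟨b, hb⟩ := hQ
  refine ⟨⟨min a.1 b.1, lt_min a.2.1 b.2.1, le_trans (min_le_left _ _) a.2.2⟩, fun e he => ?_⟩
  exact ⟨ha e (le_trans he (min_le_left _ _)), hb e (le_trans he (min_le_right _ _))⟩

lemma evMono {P Q : Idx → Prop} (h : ∀ e, P e → Q e) (hP : Ev P) : Ev Q := by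
  obtain ⟨a, ha⟩ := hP; exact ⟨a, fun e he => h e (ha e he)⟩

variable (g : Gauge)

lemma rpp (e : Idx) (m : ℕ) : 0 < g.ρ e ^ m := pow_pos (g.pos e) m

lemma rpa (e : Idx) {m p : ℕ} (h : m ≤ p) : g.ρ e ^ p ≤ g.ρ e ^ m :=
  pow_le_pow_of_le_one (g.pos e).le (g.le_one e) h

lemma ipa (e : Idx) {m p : ℕ} (h : m ≤ p) : (g.ρ e)⁻¹ ^ m ≤ (g.ρ e)⁻¹ ^ p :=
  pow_le_pow_right₀ (one_le_inv_iff₀.2 ⟨g.pos e, g.le_one e⟩) h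

lemma leR_iff (x y : Idx → ℝ) :
    leR g x y ↔ ∀ m : ℕ, Ev fun e => x e ≤ y e + g.ρ e ^ m := by
  constructor
  · rintro ⟨z, hz, hev⟩ m
    refine evMono (fun e h => ?_) (evAnd (hz m) hev)
    obtain ⟨h1, h2⟩ := h
    have := abs_le.1 (by simpa using h1)
    linarith [this.2]
  · intro h
    refine ⟨fun e => max (x e - y e) 0, fun m => ?_, ev_of_forall fun e => ?_⟩
    · refine evMono (fun e he => ?_) (h m)
      rw [sub_zero, abs_of_nonneg (le_max_right _ _)]
      exact max_le (by linarith) (rpp g e m).le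
    · have := le_max_left (x e - y e) 0
      simp only []
      linarith

lemma ltR_iff (x y : Idx → ℝ) :
    ltR g x y ↔ ∃ m : ℕ, Ev fun e => x e + g.ρ e ^ m ≤ y e := by
  constructor
  · rintro ⟨hle, w, ⟨N, hN⟩, hweq⟩
    refine ⟨N + 1, ?_⟩
    have h4 := (evAnd (evAnd (evAnd hN (hweq 1)) (g.to_zero (1/2) (by norm_num)))
      (((leR_iff g x y).1 hle) (N + 2)))
    refine evMono (fun e he => ?_) h4
    obtain ⟨⟨⟨hw, h1⟩, hρ⟩, hxy⟩ := he
    have hρ0 := g.pos e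
    have hpN : (0:ℝ) < g.ρ e ^ N := rpp g e N
    have hwp : |w e| * g.ρ e ^ N ≤ 1 := by
      rw [inv_pow] at hw
      calc |w e| * g.ρ e ^ N ≤ (g.ρ e ^ N)⁻¹ * g.ρ e ^ N :=
            mul_le_mul_of_nonneg_right hw hpN.le
        _ = 1 := inv_mul_cancel₀ hpN.ne'
    have h1' : |(y e - x e) * w e - 1| ≤ g.ρ e := by simpa using h1
    have hprod : 1 - g.ρ e ≤ |(y e - x e) * w e| := by
      have := abs_sub_abs_le_abs_sub 1 ((y e - x e) * w e)
      rw [abs_sub_comm] at this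
      simp only [abs_one] at this
      linarith
    rw [abs_mul] at hprod
    have habs : g.ρ e ^ (N + 1) ≤ |y e - x e| := by
      have h5 : (1 - g.ρ e) * (g.ρ e ^ N) ≤ |y e - x e| * (|w e| * g.ρ e ^ N) := by
        rw [← mul_assoc]
        exact mul_le_mul_of_nonneg_right hprod hpN.le
      have h6 : |y e - x e| * (|w e| * g.ρ e ^ N) ≤ |y e - x e| * 1 :=
        mul_le_mul_of_nonneg_left hwp (abs_nonneg _)
      rw [pow_succ, mul_comm (g.ρ e ^ N) (g.ρ e)]
      nlinarith [abs_nonneg (y e - x e)]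
    rcases abs_cases (y e - x e) with ⟨heq, _⟩ | ⟨heq, _⟩
    · linarith
    · have h7 : g.ρ e ^ (N + 2) < g.ρ e ^ (N + 1) := by
        rw [pow_succ]
        nlinarith [rpp g e (N + 1)]
      linarith
  · rintro ⟨m, hm⟩
    constructor
    · rw [leR_iff]
      intro j
      refine evMono (fun e he => ?_) hm
      have := rpp g e m
      have := rpp g e j
      linarith
    · refine ⟨fun e => (y e - x e)⁻¹, ⟨m, ?_⟩, fun j => ?_⟩
      · refine evMono (fun e he => ?_) hm
        have hpos : 0 < y e - x e := by have := rpp g e m; linarith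
        rw [abs_of_pos (inv_pos.2 hpos), inv_pow]
        exact inv_anti₀ (rpp g e m) (by linarith)
      · refine evMono (fun e he => ?_) hm
        have hpos : 0 < y e - x e := by have := rpp g e m; linarith
        show |(y e - x e) * (y e - x e)⁻¹ - 1| ≤ g.ρ e ^ j
        rw [mul_inv_cancel₀ hpos.ne', sub_self, abs_zero]
        exact (rpp g e j).le

lemma posInvR_iff (r : Idx → ℝ) :
    PosInvR g r ↔ ∃ m : ℕ, Ev fun e => g.ρ e ^ m ≤ r e := by
  rw [PosInvR, ltR_iff]
  simp only [zero_add]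


lemma modV_cxt {n : ℕ} (g : Gauge) {c x y : Idx → En n} (hc : ModerateV g c) (hx : ModerateV g x)
    (h : Ev fun e => ‖y e‖ ≤ ‖x e‖ + 2 * ‖c e‖) : ModerateV g y := by
  obtain ⟨N1, h1⟩ := hx
  obtain ⟨N2, h2⟩ := hc
  refine ⟨max N1 N2 + 1, evMono (fun e he => ?_)
    (evAnd (evAnd (evAnd h1 h2) h) (g.to_zero (1/3) (by norm_num)))⟩
  obtain ⟨⟨⟨hx1, hc1⟩, hy1⟩, hρ⟩ := he
  show |‖y e‖| ≤ (g.ρ e)⁻¹ ^ (max N1 N2 + 1)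
  rw [abs_norm]
  rw [show |(fun e => ‖x e‖) e| = ‖x e‖ from abs_norm _] at hx1
  rw [show |(fun e => ‖c e‖) e| = ‖c e‖ from abs_norm _] at hc1
  have hρ0 := g.pos e
  have hinv : (0:ℝ) < (g.ρ e)⁻¹ := inv_pos.2 hρ0
  have hmul : g.ρ e * (g.ρ e)⁻¹ = 1 := mul_inv_cancel₀ hρ0.ne'
  have ha3 : (3:ℝ) ≤ (g.ρ e)⁻¹ := by nlinarith
  have e1 : (g.ρ e)⁻¹ ^ N1 ≤ (g.ρ e)⁻¹ ^ (max N1 N2) := ipa g e (le_max_left _ _)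
  have e2 : (g.ρ e)⁻¹ ^ N2 ≤ (g.ρ e)⁻¹ ^ (max N1 N2) := ipa g e (le_max_right _ _)
  have e3 : (g.ρ e)⁻¹ ^ (max N1 N2 + 1) = (g.ρ e)⁻¹ ^ (max N1 N2) * (g.ρ e)⁻¹ := pow_succ _ _
  have e4 : (0:ℝ) ≤ (g.ρ e)⁻¹ ^ (max N1 N2) := pow_nonneg hinv.le _
  nlinarith

lemma proj_pt {n : ℕ} (cc xx : En n) (A : ℝ) (hA0 : 0 ≤ A) (hAd : A ≤ ‖xx - cc‖) :
    ‖(cc + (A / ‖xx - cc‖) • (xx - cc)) - cc‖ ≤ A ∧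
    ‖(cc + (A / ‖xx - cc‖) • (xx - cc)) - xx‖ = ‖xx - cc‖ - A := by
  by_cases hd : xx = cc
  · have hA : A = 0 := le_antisymm (by simpa [hd] using hAd) hA0
    simp [hd, hA]
  · have hne : xx - cc ≠ 0 := sub_ne_zero_of_ne hd
    have hdpos : 0 < ‖xx - cc‖ := norm_pos_iff.2 hne
    have e1 : cc + (A / ‖xx - cc‖) • (xx - cc) - cc = (A / ‖xx - cc‖) • (xx - cc) :=
      add_sub_cancel_left cc _
    have hdiv : 0 ≤ A / ‖xx - cc‖ := div_nonneg hA0 hdpos.le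
    constructor
    · rw [e1, norm_smul, Real.norm_eq_abs, abs_of_nonneg hdiv, div_mul_cancel₀ _ hdpos.ne']
    · have e2 : cc + (A / ‖xx - cc‖) • (xx - cc) - xx = (A / ‖xx - cc‖ - 1) • (xx - cc) := by
        rw [sub_smul, one_smul]; abel
      have hle1 : A / ‖xx - cc‖ ≤ 1 := (div_le_one hdpos).2 hAd
      rw [e2, norm_smul, Real.norm_eq_abs, abs_of_nonpos (by linarith), neg_sub, sub_mul,
        one_mul, div_mul_cancel₀ _ hdpos.ne']

/-- the sharp closure of a ball is the closed ball, realized as internal set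
generated by closed Euclidean balls; the ball is strongly internal, from open Euclidean balls. -/
theorem ball_closure_internal (g : Gauge) {n : ℕ} (c : Idx → En n) (r : Idx → ℝ)
    (hc : ModerateV g c) (hr : ModerateR g r) (hrpos : PosInvR g r) :
    SharpClosure g (BallG g c r) = {x | ModerateV g x ∧ leR g (distNet x c) r} ∧
    SharpClosure g (BallG g c r)
      = {x | ModerateV g x ∧ MemInternal g (fun e => Metric.closedBall (c e) (r e)) x} ∧
    BallG g c r = {x | ModerateV g x ∧ StrongMem g (fun e => Metric.ball (c e) (r e)) x} := by
  obtain ⟨k, hk⟩ := (posInvR_iff g r).1 hrpos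
  have tri : ∀ (a b cc : En n), ‖a - cc‖ ≤ ‖a - b‖ + ‖b - cc‖ := fun a b cc => by
    simpa [dist_eq_norm] using dist_triangle a b cc
  have h1 : SharpClosure g (BallG g c r) = {x | ModerateV g x ∧ leR g (distNet x c) r} := by
    ext x
    simp only [SharpClosure, BallG, Set.mem_setOf_eq]
    constructor
    · rintro ⟨hxmod, hcl⟩
      refine ⟨hxmod, (leR_iff g _ _).2 fun m => ?_⟩
      obtain ⟨y, ⟨hymod, hylt⟩, hdy⟩ :=
        hcl (fun e => g.ρ e ^ (m + 1))
          ((posInvR_iff g _).2 ⟨m + 1, ev_of_forall fun e => le_refl _⟩)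
      obtain ⟨k1, hk1⟩ := (ltR_iff g _ _).1 hylt
      obtain ⟨k2, hk2⟩ := (ltR_iff g _ _).1 hdy
      refine evMono (fun e he => ?_) (evAnd hk1 hk2)
      obtain ⟨ha, hb⟩ := he
      simp only [distNet] at ha hb
      show ‖x e - c e‖ ≤ r e + g.ρ e ^ m
      have t1 := tri (x e) (y e) (c e)
      have t2 : ‖x e - y e‖ = ‖y e - x e‖ := norm_sub_rev _ _
      have p1 := rpp g e k1
      have p2 := rpp g e k2
      have p3 : g.ρ e ^ (m + 1) ≤ g.ρ e ^ m := rpa g e (by omega)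
      linarith
    · rintro ⟨hxmod, hle⟩
      refine ⟨hxmod, fun s hs => ?_⟩
      obtain ⟨m, hm⟩ := (posInvR_iff g s).1 hs
      set p := max (k + 1) (m + 2) with hp
      set A : Idx → ℝ := fun e => min ‖x e - c e‖ (r e - g.ρ e ^ p) with hA
      set y : Idx → En n := fun e => c e + (A e / ‖x e - c e‖) • (x e - c e) with hy
      have key : Ev fun e => ‖y e - c e‖ + g.ρ e ^ p ≤ r e ∧ ‖y e - x e‖ ≤ 2 * g.ρ e ^ p ∧
          ‖y e‖ ≤ ‖x e‖ + 2 * ‖c e‖ := by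
        refine evMono (fun e he => ?_)
          (evAnd (evAnd hk (g.to_zero (1/3) (by norm_num))) ((leR_iff g _ _).1 hle p))
        obtain ⟨⟨hkr, hρ⟩, hdle⟩ := he
        simp only [distNet] at hdle
        have hρ0 := g.pos e
        have hppos := rpp g e p
        have hpk : g.ρ e ^ p ≤ g.ρ e ^ (k + 1) := rpa g e (le_max_left _ _)
        have hk1 : g.ρ e ^ (k + 1) ≤ 1/3 * g.ρ e ^ k := by
          rw [pow_succ]
          nlinarith [rpp g e k]
        have hA0 : 0 ≤ A e := le_min (norm_nonneg _) (by nlinarith [rpp g e k])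
        have hAd : A e ≤ ‖x e - c e‖ := min_le_left _ _
        obtain ⟨P1, P2⟩ := proj_pt (c e) (x e) (A e) hA0 hAd
        have hyc : ‖y e - c e‖ ≤ A e := P1
        have hyx : ‖y e - x e‖ = ‖x e - c e‖ - A e := P2
        refine ⟨?_, ?_, ?_⟩
        · have := min_le_right ‖x e - c e‖ (r e - g.ρ e ^ p)
          have hAle : A e ≤ r e - g.ρ e ^ p := this
          linarith
        · rw [hyx]
          rcases le_total ‖x e - c e‖ (r e - g.ρ e ^ p) with hcase | hcase
          · rw [hA]; simp only [min_eq_left hcase]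
            nlinarith [rpp g e p]
          · rw [hA]; simp only [min_eq_right hcase]
            linarith
        · have n1 : ‖y e‖ ≤ ‖c e‖ + ‖y e - c e‖ := by
            calc ‖y e‖ = ‖c e + (y e - c e)‖ := by rw [add_sub_cancel]
              _ ≤ ‖c e‖ + ‖y e - c e‖ := norm_add_le _ _
          have n2 : ‖x e - c e‖ ≤ ‖x e‖ + ‖c e‖ := norm_sub_le _ _
          linarith
      have hymod : ModerateV g y := modV_cxt g hc hxmod (evMono (fun e he => he.2.2) key)
      refine ⟨y, ⟨hymod, (ltR_iff g _ _).2 ⟨p, evMono (fun e he => ?_) key⟩⟩,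
        (ltR_iff g _ _).2 ⟨m + 1, ?_⟩⟩
      · show ‖y e - c e‖ + g.ρ e ^ p ≤ r e
        exact he.1
      · refine evMono (fun e he => ?_) (evAnd (evAnd key hm) (g.to_zero (1/3) (by norm_num)))
        obtain ⟨⟨⟨_, h2', _⟩, hms⟩, hρ⟩ := he
        show ‖y e - x e‖ + g.ρ e ^ (m + 1) ≤ s e
        have hpm : g.ρ e ^ p ≤ g.ρ e ^ (m + 2) := rpa g e (le_max_right _ _)
        have e2 : g.ρ e ^ (m + 2) = g.ρ e ^ (m + 1) * g.ρ e := pow_succ _ _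
        have e3 : g.ρ e ^ (m + 1) = g.ρ e ^ m * g.ρ e := pow_succ _ _
        have q1 := rpp g e m
        have q2 := rpp g e (m + 1)
        have q3 := g.pos e
        nlinarith
  have h2 : {x : Idx → En n | ModerateV g x ∧ leR g (distNet x c) r}
      = {x | ModerateV g x ∧ MemInternal g (fun e => Metric.closedBall (c e) (r e)) x} := by
    ext x
    simp only [Set.mem_setOf_eq]
    constructor
    · rintro ⟨hxmod, hle⟩
      set A : Idx → ℝ := fun e => min ‖x e - c e‖ (max (r e) 0) with hA
      set x' : Idx → En n := fun e => c e + (A e / ‖x e - c e‖) • (x e - c e) with hx'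
      have hA0 : ∀ e, 0 ≤ A e := fun e => le_min (norm_nonneg _) (le_max_right _ _)
      have hAd : ∀ e, A e ≤ ‖x e - c e‖ := fun e => min_le_left _ _
      refine ⟨hxmod, x', fun m => ?_, ?_⟩
      · refine evMono (fun e he => ?_) (evAnd ((leR_iff g _ _).1 hle m) hk)
        obtain ⟨hdle, hkr⟩ := he
        simp only [distNet] at hdle
        show ‖x e - x' e‖ ≤ g.ρ e ^ m
        rw [norm_sub_rev, (proj_pt (c e) (x e) (A e) (hA0 e) (hAd e)).2]
        have hr0 : 0 ≤ r e := le_trans (rpp g e k).le hkr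
        rw [hA]
        simp only [max_eq_left hr0]
        rcases le_total ‖x e - c e‖ (r e) with hcase | hcase
        · rw [min_eq_left hcase]
          simpa using (rpp g e m).le
        · rw [min_eq_right hcase]
          linarith
      · refine evMono (fun e he => ?_) hk
        show x' e ∈ Metric.closedBall (c e) (r e)
        rw [Metric.mem_closedBall, dist_eq_norm]
        refine le_trans (proj_pt (c e) (x e) (A e) (hA0 e) (hAd e)).1
          (le_trans (min_le_right _ _) ?_)
        rw [max_eq_left (le_trans (rpp g e k).le he)]
    · rintro ⟨hxmod, x', hx'eq, hx'mem⟩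
      refine ⟨hxmod, (leR_iff g _ _).2 fun m => ?_⟩
      refine evMono (fun e he => ?_) (evAnd (hx'eq m) hx'mem)
      obtain ⟨ha, hb⟩ := he
      rw [Metric.mem_closedBall, dist_eq_norm] at hb
      show ‖x e - c e‖ ≤ r e + g.ρ e ^ m
      have t1 := tri (x e) (x' e) (c e)
      linarith
  have h3 : BallG g c r = {x | ModerateV g x ∧ StrongMem g (fun e => Metric.ball (c e) (r e)) x} := by
    ext x
    simp only [BallG, Set.mem_setOf_eq]
    constructor
    · rintro ⟨hxmod, hlt⟩
      obtain ⟨m, hm⟩ := (ltR_iff g _ _).1 hlt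
      refine ⟨hxmod, fun x' hx' => ?_⟩
      refine evMono (fun e he => ?_) (evAnd (evAnd hm (hx' (m + 1))) (g.to_zero (1/3) (by norm_num)))
      obtain ⟨⟨ha, hb⟩, hρ⟩ := he
      simp only [distNet] at ha
      show x' e ∈ Metric.ball (c e) (r e)
      rw [Metric.mem_ball, dist_eq_norm]
      have t1 := tri (x' e) (x e) (c e)
      have t2 : ‖x' e - x e‖ = ‖x e - x' e‖ := norm_sub_rev _ _
      have e3 : g.ρ e ^ (m + 1) = g.ρ e ^ m * g.ρ e := pow_succ _ _
      have q1 := rpp g e m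
      nlinarith
    · rintro ⟨hxmod, hsm⟩
      refine ⟨hxmod, ?_⟩
      rcases Nat.eq_zero_or_pos n with hn | hn
      · subst hn
        have hdz : distNet x c = fun _ : Idx => (0:ℝ) := by
          funext e
          have : x e = c e := Subsingleton.elim _ _
          simp [distNet, this]
        rw [hdz]
        exact hrpos
      · classical
        rw [ltR_iff]
        by_contra hcon
        push_neg at hcon
        have hcon' : ∀ (m : ℕ) (e0 : Idx), ∃ e : Idx, e.1 ≤ e0.1 ∧
            r e < ‖x e - c e‖ + g.ρ e ^ m := by
          intro m e0
          by_contra hno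
          push_neg at hno
          exact hcon m ⟨e0, fun e he => hno e he⟩
        choose F hF1 hF2 using hcon'
        set t : Idx → ℝ := fun e => max (r e - ‖x e - c e‖) 0 with ht
        set u : Idx → En n := fun e =>
          if _ : x e = c e then EuclideanSpace.single (⟨0, hn⟩ : Fin n) (1:ℝ)
          else ‖x e - c e‖⁻¹ • (x e - c e) with hu
        have hu1 : ∀ e, ‖u e‖ = 1 := by
          intro e
          rw [hu]
          dsimp only
          split_ifs with h
          · rw [EuclideanSpace.norm_single]; norm_num
          · rw [norm_smul, Real.norm_eq_abs, abs_of_nonneg (inv_nonneg.2 (norm_nonneg _)),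
              inv_mul_cancel₀]
            rw [ne_eq, norm_eq_zero, sub_eq_zero]
            exact h
        have hxc : ∀ e, x e - c e = ‖x e - c e‖ • u e := by
          intro e
          rw [hu]
          dsimp only
          split_ifs with h
          · simp [h]
          · rw [smul_smul, mul_inv_cancel₀, one_smul]
            rw [ne_eq, norm_eq_zero, sub_eq_zero]
            exact h
        set half : Idx → Idx := fun e => ⟨e.1 / 2, half_pos e.2.1, by linarith [e.2.1, e.2.2]⟩
          with hhalf
        set seq : ℕ → Idx := fun m => Nat.rec (F 0 idx1) (fun m prev => F (m + 1) (half prev)) m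
          with hseq
        have hseqS : ∀ m, (seq (m + 1)).1 ≤ (seq m).1 / 2 := fun m => hF1 (m + 1) (half (seq m))
        have hseqt : ∀ m, t (seq m) < g.ρ (seq m) ^ m := by
          intro m
          have h2' : r (seq m) < ‖x (seq m) - c (seq m)‖ + g.ρ (seq m) ^ m := by
            cases m with
            | zero => exact hF2 0 idx1
            | succ m => exact hF2 (m + 1) (half (seq m))
          exact max_lt (by linarith) (rpp g (seq m) m)
        have hdec : ∀ m, (seq (m + 1)).1 < (seq m).1 := fun m =>
          lt_of_le_of_lt (hseqS m) (by linarith [(seq m).2.1])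
        have hanti : StrictAnti fun m => (seq m).1 := strictAnti_nat_of_succ_lt hdec
        have hbound : ∀ m, (seq m).1 ≤ (1/2 : ℝ) ^ m := by
          intro m
          induction m with
          | zero => simpa using (seq 0).2.2
          | succ m ih =>
            calc (seq (m + 1)).1 ≤ (seq m).1 / 2 := hseqS m
              _ ≤ (1/2 : ℝ) ^ m / 2 := by linarith
              _ = (1/2 : ℝ) ^ (m + 1) := by ring
        set x' : Idx → En n := fun e => if _ : ∃ m, seq m = e then x e + t e • u e else x e
          with hx'
        have hequiv : EquivV g x x' := by
          intro j
          refine ⟨seq j, fun e he => ?_⟩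
          show ‖x e - x' e‖ ≤ g.ρ e ^ j
          rw [hx']
          dsimp only
          split_ifs with h
          · obtain ⟨m, hm'⟩ := h
            have hmj : j ≤ m := by
              by_contra hlt'
              push_neg at hlt'
              have h5 : (seq j).1 < (seq m).1 := hanti hlt'
              rw [hm'] at h5
              exact absurd he h5.not_ge
            have htm : t e < g.ρ e ^ m := by
              have := hseqt m
              rwa [hm'] at this
            have ht0 : 0 ≤ t e := le_max_right _ _
            rw [sub_add_eq_sub_sub, sub_self, zero_sub, norm_neg, norm_smul, hu1, mul_one,
              Real.norm_eq_abs, abs_of_nonneg ht0]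
            exact le_trans htm.le (rpa g e hmj)
          · rw [sub_self, norm_zero]
            exact (rpp g e j).le
        obtain ⟨e0, he0⟩ := hsm x' hequiv
        obtain ⟨M, hM⟩ := exists_pow_lt_of_lt_one e0.2.1 (show (1/2 : ℝ) < 1 by norm_num)
        have hmem := he0 (seq M) (le_trans (hbound M) hM.le)
        have hmem2 : ‖x' (seq M) - c (seq M)‖ < r (seq M) := by
          have h6 : x' (seq M) ∈ Metric.ball (c (seq M)) (r (seq M)) := hmem
          rwa [Metric.mem_ball, dist_eq_norm] at h6
        have hsome : ∃ m, seq m = seq M := ⟨M, rfl⟩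
        have hx'e : x' (seq M) = x (seq M) + t (seq M) • u (seq M) := by
          rw [hx']
          dsimp only
          rw [dif_pos hsome]
        have hcomp : x' (seq M) - c (seq M)
            = (‖x (seq M) - c (seq M)‖ + t (seq M)) • u (seq M) := by
          rw [hx'e, add_smul]
          conv_lhs => rw [add_sub_right_comm, hxc (seq M)]
        rw [hcomp, norm_smul, hu1, mul_one, Real.norm_eq_abs,
          abs_of_nonneg (by positivity)] at hmem2
        have hge : r (seq M) - ‖x (seq M) - c (seq M)‖ ≤ t (seq M) := le_max_left _ _
        linarith
  exact ⟨h1, h1.trans h2, h3⟩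

end

end HFT
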